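/- Let f = f₁ ⋯ f_n be a product of n formal power series in two variables with pairwise finite intersection numbers and finite I_{f_i} = m(f_i, i_{f_i}). Then I_f = Σᵢ I_{f_i} + 6·Σ_{i<j} m(f_i, f_j). -/

import Mathlib

set_option synthInstance.maxHeartbeats 1000000

/-- Formal partial derivative of a two-variable power series with respect to the
`i`-th variable. -/
noncomputable def pd (i : Fin 2) (f : MvPowerSeries (Fin 2) ℂ) : MvPowerSeries (Fin 2) ℂ :=
  fun e => (e i + 1 : ℂ) * f (e + Finsupp.single i 1)

/-- `i_f = f_y² f_xx - 2 f_x f_y f_xy + f_x² f_yy`. -/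
noncomputable def iInv (f : MvPowerSeries (Fin 2) ℂ) : MvPowerSeries (Fin 2) ℂ :=
  (pd 1 f) ^ 2 * pd 0 (pd 0 f) - 2 * pd 0 f * pd 1 f * pd 0 (pd 1 f) +
    (pd 0 f) ^ 2 * pd 1 (pd 1 f)

/-- The intersection number `m(f,g) = dim_ℂ ℂ⟦x,y⟧/(f,g)`, valued in `ℕ ∪ {∞}`. -/
noncomputable def interNum (f g : MvPowerSeries (Fin 2) ℂ) : ℕ∞ :=
  (Module.rank ℂ (MvPowerSeries (Fin 2) ℂ ⧸ Ideal.span {f, g})).toENat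


set_option maxHeartbeats 4000000

open MvPowerSeries Finsupp

abbrev Rg := MvPowerSeries (Fin 2) ℂ

lemma shift_sum (i : Fin 2) (F : (Fin 2 →₀ ℕ) → (Fin 2 →₀ ℕ) → ℂ) (e : Fin 2 →₀ ℕ) :
    ∑ p ∈ Finset.HasAntidiagonal.antidiagonal (e + single i 1), ((p.1 : Fin 2 →₀ ℕ) i : ℂ) * F p.1 p.2
      = ∑ p ∈ Finset.HasAntidiagonal.antidiagonal e, (((p.1 : Fin 2 →₀ ℕ) i : ℂ) + 1) * F (p.1 + single i 1) p.2 := by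
  classical
  rw [← Finset.sum_filter_of_ne (p := fun p => p.1 i ≠ 0)
    (by intro x hx hne; simp only [ne_eq]; intro h0; rw [h0] at hne; simp at hne)]
  refine Finset.sum_bij' (fun p _ => (p.1 - single i 1, p.2)) (fun q _ => (q.1 + single i 1, q.2))
    ?_ ?_ ?_ ?_ ?_
  · rintro ⟨p1, p2⟩ hp
    simp only [Finset.mem_filter, Finset.HasAntidiagonal.mem_antidiagonal] at hp
    obtain ⟨hsum, hne⟩ := hp
    have hle : single i 1 ≤ p1 := single_le_iff.mpr (Nat.one_le_iff_ne_zero.mpr hne)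
    simp only [Finset.HasAntidiagonal.mem_antidiagonal]
    have : p1 - single i 1 + p2 + single i 1 = e + single i 1 := by
      rw [add_right_comm, tsub_add_cancel_of_le hle, hsum]
    exact add_right_cancel this
  · rintro ⟨q1, q2⟩ hq
    simp only [Finset.HasAntidiagonal.mem_antidiagonal] at hq
    simp only [Finset.mem_filter, Finset.HasAntidiagonal.mem_antidiagonal]
    constructor
    · rw [add_right_comm, hq]
    · simp [Finsupp.add_apply, Finsupp.single_eq_same]
  · rintro ⟨p1, p2⟩ hp
    simp only [Finset.mem_filter, Finset.HasAntidiagonal.mem_antidiagonal] at hp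
    have hle : single i 1 ≤ p1 := single_le_iff.mpr (Nat.one_le_iff_ne_zero.mpr hp.2)
    simp [tsub_add_cancel_of_le hle]
  · rintro ⟨q1, q2⟩ _
    simp
  · rintro ⟨p1, p2⟩ hp
    simp only [Finset.mem_filter, Finset.HasAntidiagonal.mem_antidiagonal] at hp
    have hle : 1 ≤ p1 i := Nat.one_le_iff_ne_zero.mpr hp.2
    have h1 : ((p1 - single i 1 : Fin 2 →₀ ℕ)) i = p1 i - 1 := by
      simp [Finsupp.tsub_apply, Finsupp.single_eq_same]
    have h2 : ((p1 i - 1 : ℕ) : ℂ) + 1 = (p1 i : ℂ) := by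
      exact_mod_cast congrArg (Nat.cast : ℕ → ℂ) (Nat.sub_add_cancel hle)
    rw [h1, h2, tsub_add_cancel_of_le (single_le_iff.mpr hle)]

lemma pd_add (i : Fin 2) (f g : Rg) : pd i (f + g) = pd i f + pd i g := by
  funext e
  show (e i + 1 : ℂ) * (f _ + g _) = (e i + 1 : ℂ) * f _ + (e i + 1 : ℂ) * g _
  ring

lemma sum_swap_ad (m : Fin 2 →₀ ℕ) (φ : (Fin 2 →₀ ℕ) × (Fin 2 →₀ ℕ) → ℂ) :
    ∑ p ∈ Finset.HasAntidiagonal.antidiagonal m, φ p = ∑ p ∈ Finset.HasAntidiagonal.antidiagonal m, φ p.swap := by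
  conv_lhs => rw [← Finset.HasAntidiagonal.map_swap_antidiagonal (n := m)]
  rw [Finset.sum_map]
  rfl

lemma pd_mul (i : Fin 2) (f g : Rg) : pd i (f * g) = pd i f * g + f * pd i g := by
  classical
  funext e
  have hco : ∀ (u v : Rg) (m : Fin 2 →₀ ℕ), (u * v) m = ∑ p ∈ Finset.HasAntidiagonal.antidiagonal m, u p.1 * v p.2 := by
    intro u v m
    simpa [MvPowerSeries.coeff_apply] using MvPowerSeries.coeff_mul (R := ℂ) m u v
  show (e i + 1 : ℂ) * (f * g) (e + single i 1) = (pd i f * g) e + (f * pd i g) e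
  rw [hco, hco, hco, Finset.mul_sum]
  have key : ∀ p ∈ Finset.HasAntidiagonal.antidiagonal (e + single i 1),
      (e i + 1 : ℂ) * (f p.1 * g p.2) =
        (((p.1 : Fin 2 →₀ ℕ) i : ℂ)) * (f p.1 * g p.2) +
          (((p.2 : Fin 2 →₀ ℕ) i : ℂ)) * (f p.1 * g p.2) := by
    intro p hp
    rw [Finset.HasAntidiagonal.mem_antidiagonal] at hp
    have h1 : p.1 i + p.2 i = e i + 1 := by
      have := congrArg (fun m => m i) hp
      simpa [Finsupp.add_apply, Finsupp.single_apply] using this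
    have h2 : ((p.1 i : ℂ)) + ((p.2 i : ℂ)) = (e i : ℂ) + 1 := by
      exact_mod_cast congrArg (Nat.cast : ℕ → ℂ) h1
    rw [← h2]; ring
  rw [Finset.sum_congr rfl key, Finset.sum_add_distrib]
  congr 1
  · rw [shift_sum i (fun a b => f a * g b) e]
    apply Finset.sum_congr rfl
    intro p _
    show ((p.1 i : ℂ) + 1) * (f (p.1 + single i 1) * g p.2) = pd i f p.1 * g p.2
    show _ = ((p.1 i + 1 : ℂ) * f (p.1 + single i 1)) * g p.2
    ring
  · rw [sum_swap_ad (e + single i 1) (fun p => ((p.2 : Fin 2 →₀ ℕ) i : ℂ) * (f p.1 * g p.2)),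
      sum_swap_ad e (fun p => f p.1 * pd i g p.2)]
    show ∑ p ∈ Finset.HasAntidiagonal.antidiagonal (e + single i 1), ((p.1 : Fin 2 →₀ ℕ) i : ℂ) * (f p.2 * g p.1) = _
    rw [shift_sum i (fun a b => f b * g a) e]
    apply Finset.sum_congr rfl
    intro p _
    show ((p.1 i : ℂ) + 1) * (f p.2 * g (p.1 + single i 1)) = f p.2 * pd i g p.1
    show _ = f p.2 * ((p.1 i + 1 : ℂ) * g (p.1 + single i 1))
    ring

noncomputable def TT (g h : Rg) : Rg :=
  (-2 * h * (pd 1 g)^2 * (pd 0 h)^2) + (4 * h * (pd 0 g) * (pd 1 g) * (pd 0 h) * (pd 1 h)) + (-2 * h * (pd 0 g)^2 * (pd 1 h)^2) + (2 * h^2 * (pd 1 g) * (pd 1 h) * pd 0 (pd 0 g)) + (-2 * h^2 * (pd 1 g) * (pd 0 h) * pd 0 (pd 1 g)) + (h^2 * (pd 1 g)^2 * pd 0 (pd 0 h)) + (-2 * h^2 * (pd 0 g) * (pd 1 h) * pd 0 (pd 1 g)) + (2 * h^2 * (pd 0 g) * (pd 0 h) * pd 1 (pd 1 g)) + (-2 *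 h^2 * (pd 0 g) * (pd 1 g) * pd 0 (pd 1 h)) + (h^2 * (pd 0 g)^2 * pd 1 (pd 1 h)) + (g * h * (pd 1 h)^2 * pd 0 (pd 0 g)) + (-2 * g * h * (pd 0 h) * (pd 1 h) * pd 0 (pd 1 g)) + (g * h * (pd 0 h)^2 * pd 1 (pd 1 g)) + (2 * g * h * (pd 1 g) * (pd 1 h) * pd 0 (pd 0 h)) + (-2 * g * h * (pd 1 g) * (pd 0 h) * pd 0 (pd 1 h)) + (-2 * g * h * (pd 0 g) * (pd 1 h) * pd 0 (pd 1 h)) + (2 * g * h * (pd 0 g) * (pd 0 h) * pd 1 (pd 1 h)) + (g^2 * (pd 1 h)^2 * pd 0 (pd 0 h)) + (-2 * g^2 * (pd 0 h) * (pd 1 h) * pd 0 (pd 1 h)) + (g^2 * (pd 0 h)^2 * pd 1 (pd 1 h))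

lemma iInv_mul (g h : Rg) : iInv (g * h) = h ^ 3 * iInv g + g * TT g h := by
  simp only [iInv, TT, pd_mul, pd_add]
  ring

lemma interNum_congr {f g f' g' : Rg} (h : Ideal.span {f, g} = Ideal.span {f', g'}) :
    interNum f g = interNum f' g' := by unfold interNum; rw [h]

lemma interNum_comm (f g : Rg) : interNum f g = interNum g f :=
  interNum_congr (by rw [Set.pair_comm])

lemma exists_X_pow_mem {f g : Rg} (hfin : interNum f g ≠ ⊤) (s : Fin 2) :
    ∃ a : ℕ, (X s : Rg) ^ a ∈ Ideal.span {f, g} := by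
  classical
  set I := Ideal.span {f, g} with hI
  have hnli : ¬ LinearIndependent ℂ (fun k : ℕ => (Ideal.Quotient.mkₐ ℂ I) ((X s : Rg) ^ k)) := by
    intro hli
    have := hli.aleph0_le_rank
    exact hfin (by simpa [interNum, Cardinal.toENat_eq_top] using this)
  rw [linearIndependent_iff'] at hnli
  push_neg at hnli
  obtain ⟨t, c, hsum, j, hjt, hcj⟩ := hnli
  set P : Rg := ∑ i ∈ t, c i • (X s : Rg) ^ i with hP
  have hPI : P ∈ I := by
    rw [← Ideal.Quotient.eq_zero_iff_mem (I := I)]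
    show Ideal.Quotient.mk I P = 0
    have : (Ideal.Quotient.mkₐ ℂ I) P = 0 := by
      rw [hP, map_sum]
      simpa using hsum
    simpa using this
  set t' := t.filter (fun i => c i ≠ 0) with ht'
  have hne : t'.Nonempty := ⟨j, by simp [ht', hjt, hcj]⟩
  set a := t'.min' hne with ha
  have hat' : a ∈ t' := t'.min'_mem hne
  have hca : c a ≠ 0 := (Finset.mem_filter.mp hat').2
  set U : Rg := ∑ i ∈ t', c i • (X s : Rg) ^ (i - a) with hU
  have hPU : P = (X s : Rg) ^ a * U := by
    rw [hP, ← Finset.sum_filter_of_ne (p := fun i => c i ≠ 0)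
      (by intro x _ hne' h0; exact hne' (by simp [h0])), hU, Finset.mul_sum]
    apply Finset.sum_congr rfl
    intro i hi
    have hle : a ≤ i := t'.min'_le i hi
    rw [mul_smul_comm, ← pow_add, Nat.add_sub_cancel' hle]
  have hUc : constantCoeff U ≠ 0 := by
    have : constantCoeff U = c a := by
      rw [hU, map_sum]
      rw [Finset.sum_eq_single_of_mem a hat']
      · simp [Algebra.smul_def, MvPowerSeries.algebraMap_apply, constantCoeff_C]
      · intro i hi hia
        have hle : a ≤ i := t'.min'_le i hi
        have : i - a ≠ 0 := by omega
        simp [Algebra.smul_def, MvPowerSeries.algebraMap_apply, constantCoeff_C, map_pow, constantCoeff_X, zero_pow this]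
    rw [this]; exact hca
  have hUu : IsUnit U := isUnit_iff_constantCoeff.mpr (isUnit_iff_ne_zero.mpr hUc)
  obtain ⟨u, hu⟩ := hUu
  refine ⟨a, ?_⟩
  have : (X s : Rg) ^ a = P * ↑u⁻¹ := by
    rw [hPU, ← hu, mul_assoc]
    simp
  rw [this]
  exact Ideal.mul_mem_right _ _ hPI

lemma X_ne_zero' (s : Fin 2) : (X s : Rg) ≠ 0 := by
  intro h
  have := congrArg (MvPowerSeries.coeff (single s 1)) h
  simp [MvPowerSeries.coeff_X] at this

lemma lemA {f : Rg} (hf : f ≠ 0) {v : Rg} (h0 : (X 0 : Rg) * v ∈ Ideal.span {f})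
    (h1 : (X 1 : Rg) * v ∈ Ideal.span {f}) : v ∈ Ideal.span {f} := by
  rw [Ideal.mem_span_singleton] at h0 h1 ⊢
  obtain ⟨α, hα⟩ := h0
  obtain ⟨β, hβ⟩ := h1
  have hswap : f * ((X 1 : Rg) * α) = f * ((X 0 : Rg) * β) := by
    have : (X 1 : Rg) * ((X 0 : Rg) * v) = (X 0 : Rg) * ((X 1 : Rg) * v) := by ring
    rw [hα, hβ] at this
    calc f * ((X 1 : Rg) * α) = (X 1 : Rg) * (f * α) := by ring
    _ = (X 0 : Rg) * (f * β) := this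
    _ = f * ((X 0 : Rg) * β) := by ring
  have heq : (X 1 : Rg) * α = (X 0 : Rg) * β := mul_left_cancel₀ hf hswap
  have hdvd : (X 0 : Rg) ∣ α := by
    rw [X_dvd_iff]
    intro m hm
    have e1 : MvPowerSeries.coeff m α
        = MvPowerSeries.coeff (m + single 1 1) ((X 1 : Rg) * α) := by
      rw [X_def, coeff_monomial_mul]
      rw [if_pos (le_add_self)]
      · rw [add_tsub_cancel_right]
        · rw [one_mul]
    have e2 : MvPowerSeries.coeff (m + single 1 1) ((X 0 : Rg) * β) = 0 := by
      rw [X_def, coeff_monomial_mul, if_neg]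
      rw [single_le_iff]
      simp [Finsupp.add_apply, Finsupp.single_apply, hm]
    rw [e1, heq, e2]
  obtain ⟨α', hα'⟩ := hdvd
  refine ⟨α', mul_left_cancel₀ (X_ne_zero' 0) ?_⟩
  calc (X 0 : Rg) * v = f * α := hα
  _ = f * ((X 0 : Rg) * α') := by rw [hα']
  _ = (X 0 : Rg) * (f * α') := by ring

lemma lemP {f : Rg} (hf : f ≠ 0) : ∀ (b : ℕ) (v : Rg), (X 0 : Rg) * v ∈ Ideal.span {f} →
    (X 1 : Rg) ^ b * v ∈ Ideal.span {f} → v ∈ Ideal.span {f} := by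
  intro b
  induction b with
  | zero => intro v _ h1; simpa using h1
  | succ b ih =>
    intro v h0 h1
    have hx1v : (X 1 : Rg) * v ∈ Ideal.span {f} := by
      apply ih ((X 1 : Rg) * v)
      · have : (X 0 : Rg) * ((X 1 : Rg) * v) = (X 1 : Rg) * ((X 0 : Rg) * v) := by ring
        rw [this]
        exact Ideal.mul_mem_left _ _ h0
      · have : (X 1 : Rg) ^ b * ((X 1 : Rg) * v) = (X 1 : Rg) ^ (b + 1) * v := by ring
        rw [this]
        exact h1
    exact lemA hf h0 hx1v

lemma lemB {f : Rg} (hf : f ≠ 0) : ∀ (a b : ℕ) (v : Rg), (X 0 : Rg) ^ a * v ∈ Ideal.span {f} →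
    (X 1 : Rg) ^ b * v ∈ Ideal.span {f} → v ∈ Ideal.span {f} := by
  intro a
  induction a with
  | zero =>
    intro b v h0 h1
    rw [pow_zero, one_mul] at h0
    exact h0
  | succ a ih =>
    intro b v h0 h1
    have hx0v : (X 0 : Rg) * v ∈ Ideal.span {f} := by
      apply ih b ((X 0 : Rg) * v)
      · have : (X 0 : Rg) ^ a * ((X 0 : Rg) * v) = (X 0 : Rg) ^ (a + 1) * v := by ring
        rw [this]; exact h0
      · have : (X 1 : Rg) ^ b * ((X 0 : Rg) * v) = (X 0 : Rg) * ((X 1 : Rg) ^ b * v) := by ring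
        rw [this]; exact Ideal.mul_mem_left _ _ h1
    exact lemP hf b v hx0v h1

/-- regularity: if `interNum f h` is finite and `h * v ∈ (f)` then `v ∈ (f)`. -/
lemma lemC {f h : Rg} (hfin : interNum f h ≠ ⊤) {v : Rg}
    (hv : h * v ∈ Ideal.span {f}) : v ∈ Ideal.span {f} := by
  obtain ⟨a, ha⟩ := exists_X_pow_mem hfin 0
  obtain ⟨b, hb⟩ := exists_X_pow_mem hfin 1
  by_cases hf : f = 0
  · subst hf
    rw [Ideal.mem_span_singleton] at hv ⊢
    have hv0 : h * v = 0 := zero_dvd_iff.mp hv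
    have hh : h ≠ 0 := by
      intro h0
      subst h0
      have : ({(0 : Rg), 0} : Set Rg) = {0} := by simp
      rw [this] at ha
      rw [Ideal.mem_span_singleton] at ha
      exact pow_ne_zero a (X_ne_zero' 0) (zero_dvd_iff.mp ha)
    rcases mul_eq_zero.mp hv0 with h' | h'
    · exact absurd h' hh
    · simp [h']
  · rw [Ideal.mem_span_pair] at ha hb
    obtain ⟨c, d, hcd⟩ := ha
    obtain ⟨c', d', hcd'⟩ := hb
    rw [Ideal.mem_span_singleton] at hv
    obtain ⟨w, hw⟩ := hv
    apply lemB hf a b v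
    · rw [Ideal.mem_span_singleton, ← hcd]
      have : (c * f + d * h) * v = f * (c * v + d * w) := by
        rw [add_mul, mul_assoc d h v, hw]; ring
      rw [this]
      exact Dvd.intro _ rfl
    · rw [Ideal.mem_span_singleton, ← hcd']
      have : (c' * f + d' * h) * v = f * (c' * v + d' * w) := by
        rw [add_mul, mul_assoc d' h v, hw]; ring
      rw [this]
      exact Dvd.intro _ rfl

lemma interNum_mul {f g h : Rg} (hh : interNum f h ≠ ⊤) :
    interNum f (g * h) = interNum f g + interNum f h := by
  classical
  set I : Ideal Rg := Ideal.span {f, g * h} with hIdef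
  set Jg : Ideal Rg := Ideal.span {f, g} with hJgdef
  set Jh : Ideal Rg := Ideal.span {f, h} with hJhdef
  set φ0 : Rg →ₗ[Rg] Rg ⧸ I := I.mkQ.comp (LinearMap.mulLeft Rg h) with hφ0
  have hφ0app : ∀ x : Rg, φ0 x = Submodule.Quotient.mk (h * x) := fun x => rfl
  have hker : LinearMap.ker φ0 = Jg := by
    apply le_antisymm
    · intro x hx
      rw [LinearMap.mem_ker, hφ0app, Submodule.Quotient.mk_eq_zero] at hx
      rw [hIdef, Ideal.mem_span_pair] at hx
      obtain ⟨a, b, hab⟩ := hx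
      have hxf : h * (x - b * g) ∈ Ideal.span {f} := by
        rw [Ideal.mem_span_singleton]
        refine ⟨a, ?_⟩
        rw [mul_sub, ← hab]; ring
      have := lemC hh hxf
      rw [Ideal.mem_span_singleton] at this
      obtain ⟨c, hc⟩ := this
      rw [hJgdef, Ideal.mem_span_pair]
      exact ⟨c, b, by rw [mul_comm c f, ← hc]; ring⟩
    · rw [hJgdef, Ideal.span_le]
      rintro x (rfl | rfl)
      · rw [SetLike.mem_coe, LinearMap.mem_ker, hφ0app, Submodule.Quotient.mk_eq_zero]
        exact Ideal.mul_mem_left _ _ (Ideal.subset_span (by simp))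
      · rw [SetLike.mem_coe, LinearMap.mem_ker, hφ0app, Submodule.Quotient.mk_eq_zero]
        have : h * x = x * h := mul_comm _ _
        rw [this]
        exact Ideal.subset_span (by simp)
  set N : Submodule Rg (Rg ⧸ I) := LinearMap.range φ0 with hN
  -- E1 : Rg ⧸ Jg ≃ N
  have E1 : (Rg ⧸ Jg) ≃ₗ[Rg] N := by
    rw [← hker]
    exact φ0.quotKerEquivRange
  -- E2 : (Rg ⧸ I) ⧸ N ≃ Rg ⧸ Jh
  set π : Rg →ₗ[Rg] (Rg ⧸ I) ⧸ N := N.mkQ.comp I.mkQ with hπ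
  have hπsurj : Function.Surjective π := by
    exact (Submodule.mkQ_surjective N).comp (Submodule.mkQ_surjective I)
  have hπker : LinearMap.ker π = Jh := by
    apply le_antisymm
    · intro x hx
      rw [LinearMap.mem_ker] at hx
      have : I.mkQ x ∈ N := by
        have hx' : N.mkQ (I.mkQ x) = 0 := hx
        rwa [Submodule.mkQ_apply, Submodule.Quotient.mk_eq_zero] at hx'
      obtain ⟨z, hz⟩ := this
      rw [hφ0app] at hz
      have hmem : x - h * z ∈ I := by
        rw [← Submodule.Quotient.mk_eq_zero (p := I)]
        have : (Submodule.Quotient.mk (x - h * z) : Rg ⧸ I)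
            = Submodule.Quotient.mk x - Submodule.Quotient.mk (h * z) := by
          exact Submodule.Quotient.mk_sub (p := I)
        rw [this, hz]
        show (I.mkQ x) - (I.mkQ x) = 0
        ring
      have hIJh : I ≤ Jh := by
        rw [hIdef, Ideal.span_le]
        rintro y (rfl | rfl)
        · exact Ideal.subset_span (by simp)
        · exact Ideal.mul_mem_left _ _ (Ideal.subset_span (by simp))
      have h1 : x - h * z ∈ Jh := hIJh hmem
      have h2 : h * z ∈ Jh := Ideal.mul_mem_right _ _ (Ideal.subset_span (by simp))
      have := Jh.add_mem h1 h2
      simpa using this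
    · rw [hJhdef, Ideal.span_le]
      rintro x (rfl | rfl)
      · rw [SetLike.mem_coe, LinearMap.mem_ker]
        show N.mkQ (I.mkQ x) = 0
        have : I.mkQ x = 0 := by
          rw [Submodule.mkQ_apply, Submodule.Quotient.mk_eq_zero]
          exact Ideal.subset_span (by simp)
        rw [this, map_zero]
      · rw [SetLike.mem_coe, LinearMap.mem_ker]
        show N.mkQ (I.mkQ x) = 0
        rw [Submodule.mkQ_apply, Submodule.Quotient.mk_eq_zero]
        exact ⟨1, by rw [hφ0app]; simp⟩
  have E2 : (Rg ⧸ Jh) ≃ₗ[Rg] ((Rg ⧸ I) ⧸ N) := by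
    rw [← hπker]
    exact π.quotKerEquivOfSurjective hπsurj
  -- rank bookkeeping over ℂ
  have main : Module.rank ℂ (Rg ⧸ I)
      = Module.rank ℂ (Rg ⧸ Jh) + Module.rank ℂ (Rg ⧸ Jg) := by
    have hr := Submodule.rank_quotient_add_rank (N.restrictScalars ℂ)
    have e1 : Module.rank ℂ ((Rg ⧸ I) ⧸ N.restrictScalars ℂ) = Module.rank ℂ (Rg ⧸ Jh) := by
      have q1 := (Submodule.Quotient.restrictScalarsEquiv ℂ N)
      have q2 := (E2.restrictScalars ℂ).symm
      exact (q1.trans q2).rank_eq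
    have e2 : Module.rank ℂ (N.restrictScalars ℂ) = Module.rank ℂ (Rg ⧸ Jg) := by
      have q1 := (Submodule.restrictScalarsEquiv (S := ℂ) (R := Rg) (M := Rg ⧸ I) N).restrictScalars ℂ
      have q2 := (E1.restrictScalars ℂ).symm
      exact (q1.trans q2).rank_eq
    rw [e1, e2] at hr
    exact hr.symm
  show (Module.rank ℂ (Rg ⧸ I)).toENat = (Module.rank ℂ (Rg ⧸ Jg)).toENat + (Module.rank ℂ (Rg ⧸ Jh)).toENat
  rw [main, map_add, add_comm]

lemma interNum_one (f : Rg) : interNum f 1 = 0 := by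
  have htop : Ideal.span {f, (1 : Rg)} = ⊤ := by
    rw [Ideal.eq_top_iff_one]
    exact Ideal.subset_span (by simp)
  have : Subsingleton (Rg ⧸ Ideal.span {f, (1 : Rg)}) := by
    rw [htop]
    exact Submodule.Quotient.subsingleton_iff.mpr rfl
  unfold interNum
  rw [rank_subsingleton']
  exact map_zero _

lemma interNum_pow {f h : Rg} (hfh : interNum f h ≠ ⊤) (n : ℕ) :
    interNum f (h ^ n) = n * interNum f h := by
  induction n with
  | zero => simpa using interNum_one f
  | succ k ih =>
    rw [pow_succ, interNum_mul hfh, ih, Nat.cast_succ, add_mul, one_mul]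

lemma interNum_iInv_left {g h : Rg} (hg : interNum g (iInv g) ≠ ⊤) (hgh : interNum g h ≠ ⊤) :
    interNum g (iInv (g * h)) = 3 * interNum g h + interNum g (iInv g) := by
  have hspan : Ideal.span {g, iInv (g * h)} = Ideal.span {g, h ^ 3 * iInv g} := by
    rw [iInv_mul g h]
    rw [mul_comm g (TT g h)]
    exact Ideal.span_pair_add_mul_left (x := g) (y := h ^ 3 * iInv g) (TT g h)
  have e1 : interNum g (iInv (g * h)) = interNum g (h ^ 3 * iInv g) := interNum_congr hspan
  rw [e1, interNum_mul hg, interNum_pow hgh 3]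
  norm_num

lemma two_factor {g h : Rg} (hg : interNum g (iInv g) ≠ ⊤) (hh : interNum h (iInv h) ≠ ⊤)
    (hgh : interNum g h ≠ ⊤) :
    interNum (g * h) (iInv (g * h)) =
      interNum g (iInv g) + interNum h (iInv h) + 6 * interNum g h := by
  have hhg : interNum h g ≠ ⊤ := by rwa [interNum_comm]
  have hA : interNum g (iInv (g * h)) = 3 * interNum g h + interNum g (iInv g) :=
    interNum_iInv_left hg hgh
  have hB : interNum h (iInv (g * h)) = 3 * interNum h g + interNum h (iInv h) := by
    rw [mul_comm g h]
    exact interNum_iInv_left hh hhg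
  have hBne : interNum (iInv (g * h)) h ≠ ⊤ := by
    rw [interNum_comm, hB]
    exact WithTop.add_ne_top.mpr ⟨WithTop.mul_ne_top (by decide) hhg, hh⟩
  have main : interNum (g * h) (iInv (g * h))
      = interNum g (iInv (g * h)) + interNum h (iInv (g * h)) := by
    rw [interNum_comm, interNum_mul hBne, interNum_comm _ g, interNum_comm _ h]
  rw [main, hA, hB, interNum_comm h g]
  ring

lemma interNum_prod {f : Rg} {n : ℕ} (G : Fin n → Rg) (hfin : ∀ i, interNum f (G i) ≠ ⊤) :
    interNum f (∏ i, G i) = ∑ i, interNum f (G i) := by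
  induction n with
  | zero => simpa using interNum_one f
  | succ k ih =>
    rw [Fin.prod_univ_succ, Fin.sum_univ_succ]
    have hPfin : interNum f (∏ i : Fin k, G i.succ) ≠ ⊤ := by
      rw [ih (fun i => G i.succ) (fun i => hfin i.succ)]
      exact WithTop.sum_ne_top.mpr (fun i _ => hfin i.succ)
    rw [interNum_mul hPfin, ih (fun i => G i.succ) (fun i => hfin i.succ)]


/-- If `f = f₁ ⋯ f_n` with all `I_{f_i}` and pairwise `m(f_i, f_j)` finite, then
`I_f = Σ I_{f_i} + 6 Σ_{i<j} m(f_i, f_j)`. -/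
theorem inflection_number_prod (n : ℕ) (F : Fin n → MvPowerSeries (Fin 2) ℂ)
    (f : MvPowerSeries (Fin 2) ℂ) (hf : f = ∏ i, F i)
    (hI : ∀ i, interNum (F i) (iInv (F i)) ≠ ⊤)
    (hm : ∀ i j, i ≠ j → interNum (F i) (F j) ≠ ⊤) :
    interNum f (iInv f) =
      (∑ i, interNum (F i) (iInv (F i))) +
        6 * ∑ i, ∑ j ∈ Finset.Ioi i, interNum (F i) (F j) := by
  subst hf
  induction n with
  | zero =>
    simp only [Finset.univ_eq_empty, Finset.prod_empty, Finset.sum_empty, mul_zero, add_zero]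
    rw [interNum_comm]
    exact interNum_one (iInv 1)
  | succ k ih =>
    set G : Fin k → Rg := fun i => F i.succ with hG
    have hIG : ∀ i, interNum (G i) (iInv (G i)) ≠ ⊤ := fun i => hI i.succ
    have hmG : ∀ i j, i ≠ j → interNum (G i) (G j) ≠ ⊤ := fun i j hij =>
      hm i.succ j.succ (fun hc => hij (Fin.succ_injective _ hc))
    have IH := ih G hIG hmG
    set g : Rg := F 0 with hg
    set h : Rg := ∏ i, G i with hh
    have hprod : ∏ i, F i = g * h := Fin.prod_univ_succ F
    -- finiteness facts
    have hgh : interNum g h = ∑ i, interNum g (G i) :=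
      interNum_prod G (fun i => hm 0 i.succ (Fin.succ_ne_zero i).symm)
    have hghne : interNum g h ≠ ⊤ := by
      rw [hgh]
      exact WithTop.sum_ne_top.mpr fun i _ => hm 0 i.succ (Fin.succ_ne_zero i).symm
    have hIhne : interNum h (iInv h) ≠ ⊤ := by
      rw [IH]
      refine WithTop.add_ne_top.mpr ⟨WithTop.sum_ne_top.mpr fun i _ => hIG i, ?_⟩
      refine WithTop.mul_ne_top (by decide) ?_
      refine WithTop.sum_ne_top.mpr fun i _ => WithTop.sum_ne_top.mpr fun j hj => ?_
      have : i < j := Finset.mem_Ioi.mp hj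
      exact hmG i j this.ne
    have key := two_factor (hI 0) hIhne hghne
    rw [hprod, key, IH, hgh]
    -- reindex sums
    rw [Fin.sum_univ_succ (fun i => interNum (F i) (iInv (F i)))]
    rw [Fin.sum_univ_succ (fun i => ∑ j ∈ Finset.Ioi i, interNum (F i) (F j))]
    rw [Fin.sum_Ioi_zero]
    have hIoi : ∀ i : Fin k, ∑ j ∈ Finset.Ioi i.succ, interNum (F i.succ) (F j)
        = ∑ j ∈ Finset.Ioi i, interNum (G i) (G j) := fun i =>
      Fin.sum_Ioi_succ (fun j => interNum (F i.succ) (F j)) i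
    rw [Finset.sum_congr rfl (fun i _ => hIoi i)]
    ring
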